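/- arXiv:1406.2776 — 2 statements merged into one kernel-verified Lean document; each statement's English description precedes it below -/
import Mathlib

section
/- Let n ≥ 3, 0 < m ≤ (n-2)/n, q ≥ max(n/(2m), (n-2)/m), and 0 < δ₁ < √(m/2) (so that 2m - 4δ₁² > 0 is allowed; it suffices that δ₁² ≤ m/2). Define φ(x) = |x|^{-q} e^{-1/(δ₁²-|x|²)} for 0 < |x| < δ₁. Then Δ(φ^m) ≥ 0 on the punctured ball {x : 0 < |x| < δ₁}; that is, φ^m is subharmonic there. -/
open Filter Topology

private lemma aux_ineq (nr m q t d : ℝ) (htp : 0 < t) (hdp : 0 < d) (hmp : 0 < m)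
    (hA1 : nr - 2 ≤ m*q) (hA2 : nr ≤ 2*(m*q)) (hmd : 2*d ≤ m) (hn3 : 3 ≤ nr) :
    0 ≤ 4*t*((-(q*m/2) / t - m / d^2)*(-(q*m/2) / t - m / d^2)
        + (-(-(q*m/2) / t^2) - 2*m / d^3)) + 2*nr*(-(q*m/2) / t - m / d^2) := by
  have key : 4*t*((-(q*m/2) / t - m / d^2)*(-(q*m/2) / t - m / d^2)
        + (-(-(q*m/2) / t^2) - 2*m / d^3)) + 2*nr*(-(q*m/2) / t - m / d^2)
      = (m*q*(m*q+2-nr))/t + (2*m*(2*(m*q)-nr))/d^2 + (4*t*m*(m-2*d))/d^4 := by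
    field_simp
    ring
  rw [key]
  have h1 : 0 ≤ (m*q*(m*q+2-nr))/t :=
    div_nonneg (mul_nonneg (by nlinarith) (by nlinarith)) htp.le
  have h2 : 0 ≤ (2*m*(2*(m*q)-nr))/d^2 :=
    div_nonneg (mul_nonneg (by nlinarith) (by nlinarith)) (by positivity)
  have h3 : 0 ≤ (4*t*m*(m-2*d))/d^4 :=
    div_nonneg (by nlinarith [mul_nonneg (mul_nonneg (by linarith : (0:ℝ) ≤ 4*t) hmp.le) (by linarith : (0:ℝ) ≤ m - 2*d)]) (by positivity)
  linarith

noncomputable def lap {n : ℕ} (f : EuclideanSpace ℝ (Fin n) → ℝ)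
    (x : EuclideanSpace ℝ (Fin n)) : ℝ :=
  ∑ i : Fin n, iteratedFDeriv ℝ 2 f x ![EuclideanSpace.single i 1, EuclideanSpace.single i 1]

/-- φ(x) = |x|^{-q} e^{-1/(δ₁²-|x|²)} has φ^m subharmonic on the punctured ball. -/
theorem stmt2 (n : ℕ) (hn : 3 ≤ n) (m q δ₁ : ℝ) (hm : 0 < m) (hm' : m ≤ ((n : ℝ) - 2) / n)
    (hq : max ((n : ℝ) / (2 * m)) (((n : ℝ) - 2) / m) ≤ q)
    (hδ : 0 < δ₁) (hδm : δ₁ ^ 2 ≤ m / 2)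
    (x : EuclideanSpace ℝ (Fin n)) (hx0 : 0 < ‖x‖) (hx1 : ‖x‖ < δ₁) :
    0 ≤ lap (fun y => (‖y‖ ^ (-q) * Real.exp (-1 / (δ₁ ^ 2 - ‖y‖ ^ 2))) ^ m) x := by
  have hn3 : (3:ℝ) ≤ (n:ℝ) := by exact_mod_cast hn
  have hq1 : (n:ℝ) / (2*m) ≤ q := le_trans (le_max_left _ _) hq
  have hq2 : ((n:ℝ) - 2) / m ≤ q := le_trans (le_max_right _ _) hq
  have hA1 : (n:ℝ) - 2 ≤ m*q := by
    rw [div_le_iff₀ hm] at hq2; linarith [hq2]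
  have hA2 : (n:ℝ) ≤ 2*(m*q) := by
    rw [div_le_iff₀ (by linarith : (0:ℝ) < 2*m)] at hq1; linarith [hq1]
  set c : ℝ := δ₁^2 with hcdef
  set a : ℝ := -(q*m/2) with hadef
  set G : ℝ → ℝ := fun t => t ^ a * Real.exp (-m / (c - t)) with hGdef
  have hfeq : (fun y : EuclideanSpace ℝ (Fin n) =>
      (‖y‖ ^ (-q) * Real.exp (-1 / (δ₁ ^ 2 - ‖y‖ ^ 2))) ^ m)
      = fun y => G (‖y‖^2) := by
    funext y
    simp only [hGdef, hcdef, hadef]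
    rw [Real.mul_rpow (Real.rpow_nonneg (norm_nonneg y) _) (Real.exp_pos _).le]
    congr 1
    · rw [← Real.rpow_natCast ‖y‖ 2, ← Real.rpow_mul (norm_nonneg y),
        ← Real.rpow_mul (norm_nonneg y)]
      congr 1
      push_cast
      ring
    · rw [← Real.exp_mul]
      congr 1
      ring
  rw [hfeq]
  -- basic positivity facts
  set t0 : ℝ := ‖x‖^2 with ht0def
  have ht0 : 0 < t0 := pow_pos hx0 2
  have hxc : t0 < c := by
    simp only [ht0def, hcdef]
    exact pow_lt_pow_left₀ hx1 (norm_nonneg x) (by norm_num)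
  have hd : 0 < c - t0 := sub_pos.mpr hxc
  -- derivative of G on Ioo 0 c
  set P : ℝ → ℝ := fun t => a / t - m / (c - t)^2 with hPdef
  have hGderiv : ∀ t ∈ Set.Ioo (0:ℝ) c, HasDerivAt G (G t * P t) t := by
    intro t ht
    obtain ⟨ht1, ht2⟩ := ht
    have hne : c - t ≠ 0 := sub_ne_zero.mpr (ne_of_gt ht2)
    have h1 : HasDerivAt (fun s : ℝ => s ^ a) (a * t ^ (a - 1)) t :=
      Real.hasDerivAt_rpow_const (Or.inl ht1.ne')
    have h2 : HasDerivAt (fun s : ℝ => c - s) (-1) t := (hasDerivAt_id t).const_sub c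
    have h3 : HasDerivAt (fun s : ℝ => -m / (c - s))
        ((0 * (c - t) - (-m) * (-1)) / (c - t)^2) t := (hasDerivAt_const t (-m)).div h2 hne
    have h4 := (Real.hasDerivAt_exp (-m / (c - t))).comp t h3
    have h5 := h1.mul h4
    refine h5.congr_deriv ?_
    simp only [hGdef, hPdef, Function.comp]
    rw [Real.rpow_sub ht1, Real.rpow_one]
    field_simp
    ring
  -- second derivative data at t0
  set P'0 : ℝ := -(a / t0^2) - 2*m / (c - t0)^3 with hP'0def
  set G2 : ℝ := G t0 * P t0 * P t0 + G t0 * P'0 with hG2def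
  set Q : ℝ → ℝ := fun t => G t * P t with hQdef
  have hPderiv : HasDerivAt P P'0 t0 := by
    have hne : c - t0 ≠ 0 := hd.ne'
    have h2 : HasDerivAt (fun s : ℝ => c - s) (-1) t0 := (hasDerivAt_id t0).const_sub c
    have ha' : HasDerivAt (fun s : ℝ => a / s) ((0 * t0 - a * 1) / t0^2) t0 :=
      (hasDerivAt_const t0 a).div (hasDerivAt_id t0) ht0.ne'
    have hb : HasDerivAt (fun s : ℝ => m / (c - s)^2)
        ((0 * (c - t0)^2 - m * (2 * (c - t0)^1 * (-1))) / ((c - t0)^2)^2) t0 :=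
      (hasDerivAt_const t0 m).div (h2.pow 2) (pow_ne_zero 2 hne)
    have := ha'.sub hb
    refine this.congr_deriv ?_
    simp only [hP'0def]
    field_simp
    ring
  have hQderiv : HasDerivAt Q G2 t0 := by
    have := (hGderiv t0 ⟨ht0, hxc⟩).mul hPderiv
    exact this
  -- gradient of squared norm
  have hsf : ∀ y : EuclideanSpace ℝ (Fin n),
      HasFDerivAt (fun y : EuclideanSpace ℝ (Fin n) => (‖y‖^2 : ℝ))
        ((2:ℕ) • (innerSL ℝ y)) y := fun y => (hasStrictFDerivAt_norm_sq y).hasFDerivAt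
  -- the neighborhood
  have hcont : Continuous (fun y : EuclideanSpace ℝ (Fin n) => (‖y‖^2 : ℝ)) := by fun_prop
  have hUmem : (fun y : EuclideanSpace ℝ (Fin n) => (‖y‖^2 : ℝ)) ⁻¹' (Set.Ioo 0 c) ∈ 𝓝 x :=
    (isOpen_Ioo.preimage hcont).mem_nhds ⟨ht0, hxc⟩
  have hfd : ∀ y ∈ (fun y : EuclideanSpace ℝ (Fin n) => (‖y‖^2 : ℝ)) ⁻¹' (Set.Ioo 0 c),
      HasFDerivAt (fun y : EuclideanSpace ℝ (Fin n) => G (‖y‖^2))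
        ((Q (‖y‖^2)) • ((2:ℕ) • innerSL ℝ y)) y := by
    intro y hy
    exact (hGderiv _ hy).comp_hasFDerivAt y (hsf y)
  -- smoothness of f at x
  have hGC : ContDiffAt ℝ 2 G t0 := by
    have h1 : ContDiffAt ℝ 2 (fun t : ℝ => t ^ a) t0 :=
      Real.contDiffAt_rpow_const_of_ne ht0.ne'
    have h2 : ContDiffAt ℝ 2 (fun t : ℝ => -m / (c - t)) t0 :=
      (contDiffAt_const).div ((contDiffAt_const).sub contDiffAt_id) hd.ne'
    exact h1.mul (Real.contDiff_exp.contDiffAt.comp t0 h2)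
  have hfC2 : ContDiffAt ℝ 2 (fun y : EuclideanSpace ℝ (Fin n) => G (‖y‖^2)) x :=
    hGC.comp x (contDiff_norm_sq ℝ).contDiffAt
  have hdf : DifferentiableAt ℝ
      (fderiv ℝ (fun y : EuclideanSpace ℝ (Fin n) => G (‖y‖^2))) x :=
    (hfC2.fderiv_right (m := 1) (by norm_num)).differentiableAt one_ne_zero
  -- per-direction second derivative
  have key : ∀ i : Fin n,
      iteratedFDeriv ℝ 2 (fun y : EuclideanSpace ℝ (Fin n) => G (‖y‖^2)) x
        ![EuclideanSpace.single i 1, EuclideanSpace.single i 1]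
      = 4 * G2 * (x i)^2 + 2 * Q t0 := by
    intro i
    set v : EuclideanSpace ℝ (Fin n) := EuclideanSpace.single i 1 with hvdef
    rw [iteratedFDeriv_two_apply]
    simp only [Matrix.cons_val_zero, Matrix.cons_val_one, Matrix.head_cons]
    have hflip : fderiv ℝ (fun y => fderiv ℝ
        (fun y : EuclideanSpace ℝ (Fin n) => G (‖y‖^2)) y v) x
        = (fderiv ℝ (fderiv ℝ (fun y : EuclideanSpace ℝ (Fin n) => G (‖y‖^2))) x).flip v := by
      rw [fderiv_clm_apply hdf (differentiableAt_const v)]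
      simp
    have hev : (fun y => fderiv ℝ (fun y : EuclideanSpace ℝ (Fin n) => G (‖y‖^2)) y v)
        =ᶠ[𝓝 x] fun y => Q (‖y‖^2) * (2 * (inner ℝ v y : ℝ)) := by
      filter_upwards [hUmem] with y hy
      rw [(hfd y hy).fderiv]
      simp only [ContinuousLinearMap.smul_apply, innerSL_apply_apply, smul_eq_mul, nsmul_eq_mul]
      rw [real_inner_comm y v]
      push_cast
      ring
    have hinner : HasFDerivAt (fun y : EuclideanSpace ℝ (Fin n) => (inner ℝ v y : ℝ))
        (innerSL ℝ v) x := (innerSL ℝ v).hasFDerivAt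
    have h2i : HasFDerivAt (fun y : EuclideanSpace ℝ (Fin n) => 2 * (inner ℝ v y : ℝ))
        ((2:ℝ) • innerSL ℝ v) x := hinner.const_mul 2
    have hQc : HasFDerivAt (fun y : EuclideanSpace ℝ (Fin n) => Q (‖y‖^2))
        (G2 • ((2:ℕ) • innerSL ℝ x)) x := by
        have := hQderiv.comp_hasFDerivAt x (hsf x); exact this
    have hprod : HasFDerivAt (fun y : EuclideanSpace ℝ (Fin n) => Q (‖y‖^2) * (2 * (inner ℝ v y : ℝ))) _ x :=
      hQc.mul h2i
    have : fderiv ℝ (fderiv ℝ (fun y : EuclideanSpace ℝ (Fin n) => G (‖y‖^2))) x v v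
        = fderiv ℝ (fun y => fderiv ℝ
          (fun y : EuclideanSpace ℝ (Fin n) => G (‖y‖^2)) y v) x v := by
      rw [hflip]; rfl
    rw [this, hev.fderiv_eq, hprod.fderiv]
    have hvv : (inner ℝ v v : ℝ) = 1 := by
      simp [hvdef, real_inner_self_eq_norm_sq]
    have hvx : (inner ℝ v x : ℝ) = x i := by
      simp [hvdef, EuclideanSpace.inner_single_left]
    have hxv : (inner ℝ x v : ℝ) = x i := by
      simp [hvdef, EuclideanSpace.inner_single_right]
    simp only [ContinuousLinearMap.add_apply, ContinuousLinearMap.smul_apply,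
      innerSL_apply_apply, smul_eq_mul, hvv, hvx, hxv]
    push_cast
    ring
  -- sum up
  have hsum : lap (fun y : EuclideanSpace ℝ (Fin n) => G (‖y‖^2)) x
      = 4 * G2 * t0 + 2 * n * Q t0 := by
    simp only [lap, key]
    rw [Finset.sum_add_distrib, ← Finset.mul_sum, Finset.sum_const, Finset.card_univ,
      Fintype.card_fin]
    have hnorm : ∑ i : Fin n, (x i)^2 = t0 := by
      simp only [ht0def, EuclideanSpace.norm_eq]
      rw [Real.sq_sqrt (by positivity)]
      congr 1
      funext i
      simp [sq_abs]
    rw [hnorm]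
    push_cast
    ring
  rw [hsum]
  -- final inequality
  have hG0 : 0 < G t0 := by
    simp only [hGdef]
    exact mul_pos (Real.rpow_pos_of_pos ht0 a) (Real.exp_pos _)
  have hkey : 0 ≤ 4 * t0 * (P t0 * P t0 + P'0) + 2 * n * P t0 := by
    have hmd : 2 * (c - t0) ≤ m := by nlinarith
    simp only [hPdef, hP'0def, hadef]
    exact aux_ineq (n:ℝ) m q t0 (c - t0) ht0 hd hm hA1 hA2 hmd hn3
  have : 4 * G2 * t0 + 2 * n * Q t0
      = G t0 * (4 * t0 * (P t0 * P t0 + P'0) + 2 * n * P t0) := by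
    simp only [hG2def, hQdef]
    ring
  rw [this]
  exact mul_nonneg hG0.le hkey
end

section
/- Let n ≥ 1, 0 < m < 1, δ₂ > 0, M ≥ 0, c₀ ∈ (0,1], and set A₂ ≥ max( (m(1-m)(m+n-1)/δ₂²)^{1/(1-m)}, (δ₂ M/(m c₀))^{1/m} ). Then the function w(x,t) = A₂ (1+t)^{1/(1-m)} e^{|x-a|/δ₂}, for x ≠ a, satisfies Δ(w^m)(x,t) ≤ w_t(x,t) for all x with |x - a| ≥ δ₂ and all t > 0. -/
lemma lap_radial_exp (n : ℕ) (K c₁ : ℝ) (a x : EuclideanSpace ℝ (Fin n)) (hxa : x ≠ a) :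
    lap (fun y => K * Real.exp (c₁ * ‖y - a‖)) x
      = K * c₁ * Real.exp (c₁ * ‖x - a‖) * (c₁ + ((n : ℝ) - 1) / ‖x - a‖) := by
  have hr : 0 < ‖x - a‖ := by
    rw [norm_pos_iff]; exact sub_ne_zero.mpr hxa
  set r : ℝ := ‖x - a‖ with hrdef
  -- the function as composition through s = ‖y-a‖²
  set φ : ℝ → ℝ := fun s => K * Real.exp (c₁ * Real.sqrt s) with hφdef
  set ψ : ℝ → ℝ := fun s => K * c₁ / 2 * (Real.exp (c₁ * Real.sqrt s) * (Real.sqrt s)⁻¹) with hψdef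
  set q : EuclideanSpace ℝ (Fin n) → ℝ := fun y => ‖y - a‖ ^ 2 with hqdef
  have hfeq : (fun y : EuclideanSpace ℝ (Fin n) => K * Real.exp (c₁ * ‖y - a‖)) = fun y => φ (q y) := by
    funext y
    simp [φ, q, Real.sqrt_sq (norm_nonneg (y - a))]
  rw [hfeq]
  -- derivative of q
  have hq : ∀ y : EuclideanSpace ℝ (Fin n), HasFDerivAt q ((2:ℝ) • (innerSL ℝ (y - a))) y := by
    intro y
    rw [hqdef]
    convert ((hasFDerivAt_id (𝕜 := ℝ) y).sub_const a).norm_sq using 1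
    ext v
    simp [two_smul]
    · rfl
    ext v
    simp [two_smul]
  -- derivative of φ
  have hφ' : ∀ s : ℝ, 0 < s → HasDerivAt φ (ψ s) s := by
    intro s hs
    have hsq : (0:ℝ) < Real.sqrt s := Real.sqrt_pos.2 hs
    have h1 := ((Real.hasDerivAt_sqrt hs.ne').const_mul c₁).exp.const_mul K
    convert h1 using 1
    · rfl
    · rfl
    rw [hψdef]
    field_simp
  -- Df : first derivative of f as a function
  set Df : EuclideanSpace ℝ (Fin n) → (EuclideanSpace ℝ (Fin n) →L[ℝ] ℝ) := fun y => ψ (q y) • ((2:ℝ) • (innerSL ℝ (y - a))) with hDfdef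
  have hfd : ∀ y : EuclideanSpace ℝ (Fin n), y ≠ a → HasFDerivAt (fun y => φ (q y)) (Df y) y := by
    intro y hy
    have hqy : 0 < q y := by
      have : 0 < ‖y - a‖ := by rw [norm_pos_iff]; exact sub_ne_zero.mpr hy
      simp only [hqdef]; positivity
    exact (hφ' (q y) hqy).comp_hasFDerivAt y (hq y)
  have hev : fderiv ℝ (fun y => φ (q y)) =ᶠ[nhds x] Df := by
    filter_upwards [eventually_ne_nhds hxa] with y hy
    exact (hfd y hy).fderiv
  -- second derivative
  have hs0 : Real.sqrt (q x) = r := by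
    simp only [hqdef]; exact Real.sqrt_sq (norm_nonneg _)
  have hqx : q x = r ^ 2 := by simp [hqdef, r]
  set W : ℝ := K * c₁ / 2 * ((Real.exp (c₁ * r) * (c₁ * (1 / (2 * r)))) * r⁻¹
      + Real.exp (c₁ * r) * (-(1 / (2 * r)) / r ^ 2)) with hWdef
  have hψ' : HasDerivAt ψ W (q x) := by
    have hqx0 : (0:ℝ) < q x := by rw [hqx]; positivity
    have h1 := Real.hasDerivAt_sqrt hqx0.ne'
    have hexp := (h1.const_mul c₁).exp
    have hinv := h1.inv (by rw [hs0]; exact hr.ne')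
    have h2 := (hexp.mul hinv).const_mul (K * c₁ / 2)
    simp only [Pi.inv_apply] at h2
    rw [hs0] at h2
    exact h2
  have hψq : HasFDerivAt (fun y => ψ (q y)) (W • ((2:ℝ) • (innerSL ℝ (x - a)))) x :=
    hψ'.comp_hasFDerivAt x (hq x)
  have hL : HasFDerivAt (fun y : EuclideanSpace ℝ (Fin n) => (2:ℝ) • (innerSL ℝ (y - a)))
      ((2:ℝ) • (innerSL ℝ : EuclideanSpace ℝ (Fin n) →L[ℝ] EuclideanSpace ℝ (Fin n) →L[ℝ] ℝ)) x := by
    have h0 := ((innerSL ℝ : EuclideanSpace ℝ (Fin n) →L[ℝ] EuclideanSpace ℝ (Fin n) →L[ℝ] ℝ).hasFDerivAt (x := x - a)).comp x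
      ((hasFDerivAt_id x).sub_const a)
    exact h0.const_smul (2:ℝ)
  have hDf2 := hψq.smul hL
  have h2d := hev.fderiv_eq.trans hDf2.fderiv
  -- compute the sum
  have hlap : lap (fun y => φ (q y)) x = 2 * (n:ℝ) * ψ (q x) + 4 * W * r ^ 2 := by
    have heval : ∀ i : Fin n,
        (fderiv ℝ (fderiv ℝ (fun y => φ (q y))) x) (EuclideanSpace.single i 1)
          (EuclideanSpace.single i 1)
        = 2 * ψ (q x) + 4 * W * ((x - a) i) ^ 2 := by
      intro i
      rw [h2d]
      simp only [ContinuousLinearMap.add_apply, ContinuousLinearMap.smul_apply,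
        ContinuousLinearMap.smulRight_apply, innerSL_apply_apply, smul_eq_mul,
        EuclideanSpace.inner_single_right, EuclideanSpace.inner_single_left,
        map_one, conj_trivial, EuclideanSpace.single_apply, if_pos rfl, if_true]
      have hii : ((innerSL ℝ) (EuclideanSpace.single i (1:ℝ) : EuclideanSpace ℝ (Fin n)))
          (EuclideanSpace.single i 1) = 1 := by simp
      rw [hii]
      ring
    simp only [lap, iteratedFDeriv_two_apply, Matrix.cons_val_zero, Matrix.cons_val_one,
      Matrix.head_cons]
    rw [Finset.sum_congr rfl fun i _ => heval i, Finset.sum_add_distrib, Finset.sum_const,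
      ← Finset.mul_sum]
    have hsum : ∑ i : Fin n, ((x - a) i) ^ 2 = r ^ 2 := by
      have h1 : ‖x - a‖ = Real.sqrt (∑ i, ‖(x - a) i‖ ^ 2) := EuclideanSpace.norm_eq (x - a)
      have h2 : r ^ 2 = ∑ i, ‖(x - a) i‖ ^ 2 := by
        rw [hrdef, h1, Real.sq_sqrt (by positivity)]
      rw [h2]
      simp [Real.norm_eq_abs, sq_abs]
    rw [hsum]
    simp
    ring
  rw [hlap, hqx]
  have hsr : Real.sqrt (r ^ 2) = r := Real.sqrt_sq hr.le
  simp only [hψdef, hWdef, hsr]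
  field_simp
  ring

/-- w(x,t) = A₂(1+t)^{1/(1-m)} e^{|x-a|/δ₂} satisfies Δ(w^m) ≤ w_t for
|x-a| ≥ δ₂, t > 0, when A₂ ≥ max((m(1-m)(m+n-1)/δ₂²)^{1/(1-m)}, (δ₂M/(mc₀))^{1/m}). -/
theorem stmt5 (n : ℕ) (hn : 1 ≤ n) (m δ₂ M c₀ A₂ : ℝ) (hm : 0 < m) (hm1 : m < 1)
    (hδ : 0 < δ₂) (hM : 0 ≤ M) (hc : 0 < c₀) (hc1 : c₀ ≤ 1)
    (hA : max ((m * (1 - m) * (m + (n : ℝ) - 1) / δ₂ ^ 2) ^ (1 / (1 - m)))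
        ((δ₂ * M / (m * c₀)) ^ (1 / m)) ≤ A₂)
    (a x : EuclideanSpace ℝ (Fin n)) (hx : δ₂ ≤ ‖x - a‖) (t : ℝ) (ht : 0 < t) :
    lap (fun y => (A₂ * (1 + t) ^ (1 / (1 - m)) * Real.exp (‖y - a‖ / δ₂)) ^ m) x ≤
      deriv (fun s : ℝ => A₂ * (1 + s) ^ (1 / (1 - m)) * Real.exp (‖x - a‖ / δ₂)) t := by
  have hn' : (1:ℝ) ≤ (n:ℝ) := by exact_mod_cast hn
  have h1m : (0:ℝ) < 1 - m := by linarith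
  have hr : (0:ℝ) < ‖x - a‖ := lt_of_lt_of_le hδ hx
  have hxa : x ≠ a := by
    intro h; rw [h, sub_self, norm_zero] at hr; exact lt_irrefl 0 hr
  have ht1 : (0:ℝ) < 1 + t := by linarith
  have hB : (0:ℝ) < m * (1 - m) * (m + (n:ℝ) - 1) / δ₂ ^ 2 := by
    have h2 : (0:ℝ) < m + (n:ℝ) - 1 := by linarith
    positivity
  have hA2 : (0:ℝ) < A₂ :=
    lt_of_lt_of_le (Real.rpow_pos_of_pos hB _) (le_trans (le_max_left _ _) hA)
  have hpt : (0:ℝ) < (1 + t) ^ (1 / (1 - m)) := Real.rpow_pos_of_pos ht1 _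
  have hpt' : (0:ℝ) < (1 + t) ^ (1 / (1 - m) - 1) := Real.rpow_pos_of_pos ht1 _
  have hC : (0:ℝ) < A₂ * (1 + t) ^ (1 / (1 - m)) := by positivity
  have hfeq : (fun y : EuclideanSpace ℝ (Fin n) =>
      (A₂ * (1 + t) ^ (1 / (1 - m)) * Real.exp (‖y - a‖ / δ₂)) ^ m)
      = fun y => (A₂ * (1 + t) ^ (1 / (1 - m))) ^ m * Real.exp (m / δ₂ * ‖y - a‖) := by
    funext y
    rw [Real.mul_rpow hC.le (Real.exp_pos _).le, ← Real.exp_mul]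
    ring_nf
  rw [hfeq, lap_radial_exp n _ _ a x hxa]
  have hR : deriv (fun s : ℝ => A₂ * (1 + s) ^ (1 / (1 - m)) * Real.exp (‖x - a‖ / δ₂)) t
      = A₂ * ((1 / (1 - m)) * (1 + t) ^ (1 / (1 - m) - 1)) * Real.exp (‖x - a‖ / δ₂) := by
    have hin : HasDerivAt (fun s : ℝ => 1 + s) 1 t := by
      simpa using (hasDerivAt_id t).const_add (1:ℝ)
    have h1 : HasDerivAt (fun s : ℝ => (1 + s) ^ (1 / (1 - m)))
        ((1 / (1 - m)) * (1 + t) ^ (1 / (1 - m) - 1) * 1) t :=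
      (Real.hasDerivAt_rpow_const (p := 1 / (1 - m)) (Or.inl ht1.ne')).comp t hin
    have h2 := (h1.const_mul A₂).mul_const (Real.exp (‖x - a‖ / δ₂))
    rw [h2.deriv]; ring
  rw [hR]
  have hpm : (1 / (1 - m)) * m = 1 / (1 - m) - 1 := by field_simp; ring
  have hKeq : (A₂ * (1 + t) ^ (1 / (1 - m))) ^ m
      = A₂ ^ m * (1 + t) ^ (1 / (1 - m) - 1) := by
    rw [Real.mul_rpow hA2.le hpt.le, ← Real.rpow_mul ht1.le, hpm]
  rw [hKeq]
  -- facts for the inequality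
  have hexple : Real.exp (m / δ₂ * ‖x - a‖) ≤ Real.exp (‖x - a‖ / δ₂) := by
    apply Real.exp_le_exp.2
    rw [div_mul_eq_mul_div, div_le_div_iff_of_pos_right hδ]
    nlinarith
  have hn1 : (0:ℝ) ≤ (n:ℝ) - 1 := by linarith
  have hang : m / δ₂ + ((n:ℝ) - 1) / ‖x - a‖ ≤ (m + (n:ℝ) - 1) / δ₂ := by
    have h1 : ((n:ℝ) - 1) / ‖x - a‖ ≤ ((n:ℝ) - 1) / δ₂ :=
      div_le_div_of_nonneg_left hn1 hδ hx
    calc m / δ₂ + ((n:ℝ) - 1) / ‖x - a‖ ≤ m / δ₂ + ((n:ℝ) - 1) / δ₂ := by linarith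
      _ = (m + (n:ℝ) - 1) / δ₂ := by ring
  have hA1m : m * (1 - m) * (m + (n:ℝ) - 1) / δ₂ ^ 2 ≤ A₂ ^ (1 - m) := by
    have h0 : (m * (1 - m) * (m + (n:ℝ) - 1) / δ₂ ^ 2) ^ (1/(1-m)) ≤ A₂ :=
      le_trans (le_max_left _ _) hA
    have h1 := Real.rpow_le_rpow (Real.rpow_nonneg hB.le _) h0 h1m.le
    rwa [← Real.rpow_mul hB.le, one_div, inv_mul_cancel₀ h1m.ne', Real.rpow_one] at h1
  have hppos : (0:ℝ) < 1 / (1 - m) := by positivity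
  have hfinal : A₂ ^ m * (m / δ₂ * ((m + (n:ℝ) - 1) / δ₂)) ≤ A₂ * (1 / (1 - m)) := by
    have h2 : A₂ ^ m * A₂ ^ (1 - m) = A₂ := by
      rw [← Real.rpow_add hA2]; norm_num
    have h3 : m / δ₂ * ((m + (n:ℝ) - 1) / δ₂)
        = (m * (1 - m) * (m + (n:ℝ) - 1) / δ₂ ^ 2) * (1 / (1 - m)) := by
      field_simp
    calc A₂ ^ m * (m / δ₂ * ((m + (n:ℝ) - 1) / δ₂))
        = A₂ ^ m * (m * (1 - m) * (m + (n:ℝ) - 1) / δ₂ ^ 2) * (1 / (1 - m)) := by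
          rw [h3]; ring
      _ ≤ A₂ ^ m * A₂ ^ (1 - m) * (1 / (1 - m)) := by
          have hAm : (0:ℝ) ≤ A₂ ^ m := Real.rpow_nonneg hA2.le m
          have := mul_le_mul_of_nonneg_left hA1m hAm
          exact mul_le_mul_of_nonneg_right this hppos.le
      _ = A₂ * (1 / (1 - m)) := by rw [h2]
  have hstep : (A₂ ^ m * (m / δ₂ * (m / δ₂ + ((n:ℝ) - 1) / ‖x - a‖)))
      * Real.exp (m / δ₂ * ‖x - a‖)
      ≤ (A₂ * (1 / (1 - m))) * Real.exp (‖x - a‖ / δ₂) := by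
    have h1 : A₂ ^ m * (m / δ₂ * (m / δ₂ + ((n:ℝ) - 1) / ‖x - a‖))
        ≤ A₂ ^ m * (m / δ₂ * ((m + (n:ℝ) - 1) / δ₂)) :=
      mul_le_mul_of_nonneg_left (mul_le_mul_of_nonneg_left hang (by positivity))
        (Real.rpow_nonneg hA2.le m)
    have hS0 : (0:ℝ) ≤ A₂ ^ m * (m / δ₂ * (m / δ₂ + ((n:ℝ) - 1) / ‖x - a‖)) := by
      have : (0:ℝ) ≤ m / δ₂ + ((n:ℝ) - 1) / ‖x - a‖ :=
        add_nonneg (by positivity) (div_nonneg hn1 hr.le)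
      positivity
    exact mul_le_mul (le_trans h1 hfinal) hexple (Real.exp_pos _).le
      (mul_nonneg hA2.le hppos.le)
  calc A₂ ^ m * (1 + t) ^ (1 / (1 - m) - 1) * (m / δ₂) * Real.exp (m / δ₂ * ‖x - a‖)
        * (m / δ₂ + ((n:ℝ) - 1) / ‖x - a‖)
      = ((A₂ ^ m * (m / δ₂ * (m / δ₂ + ((n:ℝ) - 1) / ‖x - a‖)))
          * Real.exp (m / δ₂ * ‖x - a‖)) * (1 + t) ^ (1 / (1 - m) - 1) := by ring
    _ ≤ ((A₂ * (1 / (1 - m))) * Real.exp (‖x - a‖ / δ₂)) * (1 + t) ^ (1 / (1 - m) - 1) :=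
        mul_le_mul_of_nonneg_right hstep hpt'.le
    _ = A₂ * ((1 / (1 - m)) * (1 + t) ^ (1 / (1 - m) - 1)) * Real.exp (‖x - a‖ / δ₂) := by
        ring
end
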